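/- arXiv:1409.0993 — 2 statements merged into one kernel-verified Lean document; each statement's English description precedes it below -/
import Mathlib

section
/- Let h : A → B be a homomorphism of abelian groups whose cokernel has finite exponent. For an abelian group M, let M̂ = lim_{n ≥ 1} M/nM denote the inverse limit over the positive integers ordered by divisibility, with transition maps the natural surjections M/mM → M/nM for n ∣ m; let ĥ : Â → B̂ be the homomorphism induced by h. Then the natural map Coker(h) → Coker(ĥ) is injective. -/
/-! If `b̂ = ĥ y`, then reading off the component at level `e` (an exponent of `Coker h`) gives
`b ≡ h a mod eB` for some `a`; since `eB ⊆ h(A)`, already `b ∈ h(A)`. -/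

noncomputable section

/-- The subgroup `n M` of `n`-th multiples of the abelian group `M`. -/
def mulRange (n : ℕ) (M : Type*) [AddCommGroup M] : AddSubgroup M :=
  AddMonoidHom.range (AddMonoidHom.mk' (fun x : M => n • x) fun a b => smul_add n a b)

lemma mulRange_le_of_dvd {M : Type*} [AddCommGroup M] {n m : ℕ} (h : n ∣ m) :
    mulRange m M ≤ mulRange n M := by
  rintro _ ⟨y, rfl⟩
  obtain ⟨c, rfl⟩ := h
  exact ⟨c • y, by simp [mul_smul]⟩

/-- For `n ∣ m`, the natural surjection `M/mM → M/nM`. -/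
def transMap {n m : ℕ} (M : Type*) [AddCommGroup M] (h : n ∣ m) :
    M ⧸ mulRange m M →+ M ⧸ mulRange n M :=
  QuotientAddGroup.map (mulRange m M) (mulRange n M) (AddMonoidHom.id M)
    (fun x hx => mulRange_le_of_dvd h hx)

/-- The map `A/nA → B/nB` induced by a homomorphism `h : A → B`. -/
def mapQuot {A B : Type*} [AddCommGroup A] [AddCommGroup B] (h : A →+ B) (n : ℕ) :
    A ⧸ mulRange n A →+ B ⧸ mulRange n B :=
  QuotientAddGroup.map (mulRange n A) (mulRange n B) h
    (by rintro _ ⟨y, rfl⟩; exact ⟨h y, by simp⟩)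

lemma transMap_mapQuot {A B : Type*} [AddCommGroup A] [AddCommGroup B] (h : A →+ B)
    {n m : ℕ} (hd : n ∣ m) (y : A ⧸ mulRange m A) :
    transMap B hd (mapQuot h m y) = mapQuot h n (transMap A hd y) := by
  induction y using QuotientAddGroup.induction_on with
  | H a => rfl

/-- The completion `M̂ = lim_{n ≥ 1} M/nM` of an abelian group `M`: the subgroup of
`∏_{n ≥ 1} M/nM` consisting of the families compatible with the natural surjections
`M/mM → M/nM` for `n ∣ m`. -/
def hatCompletion (M : Type*) [AddCommGroup M] :
    AddSubgroup (∀ n : ℕ+, M ⧸ mulRange n M) where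
  carrier := {x | ∀ (n m : ℕ+) (h : (n : ℕ) ∣ (m : ℕ)), transMap M h (x m) = x n}
  zero_mem' := by intro n m h; simp
  add_mem' := by
    intro x y hx hy n m h
    simp only [Pi.add_apply, map_add, hx n m h, hy n m h]
  neg_mem' := by
    intro x hx n m h
    simp only [Pi.neg_apply, map_neg, hx n m h]

/-- The natural map `M → M̂`. -/
def toHat (M : Type*) [AddCommGroup M] : M →+ hatCompletion M :=
  AddMonoidHom.mk'
    (fun a => ⟨fun _ => QuotientAddGroup.mk a, fun _ _ _ => rfl⟩)
    (fun a b => by ext n; rfl)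

/-- The homomorphism `ĥ : Â → B̂` induced by a homomorphism `h : A → B`. -/
def hatMap {A B : Type*} [AddCommGroup A] [AddCommGroup B] (h : A →+ B) :
    hatCompletion A →+ hatCompletion B :=
  AddMonoidHom.mk'
    (fun x => ⟨fun n => mapQuot h n (x.1 n),
      fun n m hd => by rw [transMap_mapQuot h hd (x.1 m), x.2 n m hd]⟩)
    (fun x y => by ext n; simp [mapQuot])

lemma mulRange_le_of_forall_nsmul_eq_zero {M : Type*} [AddCommGroup M] {H : AddSubgroup M}
    {e : ℕ} (hkill : ∀ x : M ⧸ H, e • x = 0) : mulRange e M ≤ H := by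
  rintro _ ⟨c, rfl⟩
  rw [← QuotientAddGroup.eq_zero_iff]
  exact hkill c

lemma exists_sub_mem_mulRange_of_toHat_mem_range {A B : Type*} [AddCommGroup A]
    [AddCommGroup B] (h : A →+ B) {b : B} (hb : toHat B b ∈ (hatMap h).range) (n : ℕ+) :
    ∃ a, b - h a ∈ mulRange n B := by
  obtain ⟨y, hy⟩ := hb
  obtain ⟨a, ha⟩ := QuotientAddGroup.mk_surjective (y.1 n)
  have hmk : (QuotientAddGroup.mk (h a) : B ⧸ mulRange n B) = QuotientAddGroup.mk b := by
    change mapQuot h n (QuotientAddGroup.mk a) = _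
    rw [ha]
    exact congrFun (congrArg Subtype.val hy) n
  exact ⟨a, QuotientAddGroup.eq_iff_sub_mem.mp hmk.symm⟩

/-- **Lemma (abelian groups, (i)).**  Let `h : A → B` be a homomorphism of abelian groups
whose cokernel has finite exponent.  Then the natural map `Coker(h) → Coker(ĥ)` is
injective, where `ĥ : Â → B̂` is the induced homomorphism of completions. -/
theorem injective_cokerMap_hat {A B : Type*} [AddCommGroup A] [AddCommGroup B] (h : A →+ B)
    (hcoker : ∃ e : ℕ, 0 < e ∧ ∀ x : B ⧸ h.range, e • x = 0) :
    Function.Injective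
      (QuotientAddGroup.map h.range (hatMap h).range (toHat B)
        (by rintro _ ⟨a, rfl⟩; exact ⟨toHat A a, by ext n; rfl⟩)) := by
  obtain ⟨e, he, hkill⟩ := hcoker
  rw [injective_iff_map_eq_zero]
  intro x hx
  induction x using QuotientAddGroup.induction_on with
  | H b =>
    rw [QuotientAddGroup.map_mk, QuotientAddGroup.eq_zero_iff] at hx
    rw [QuotientAddGroup.eq_zero_iff]
    obtain ⟨a, hab⟩ := exists_sub_mem_mulRange_of_toHat_mem_range h hx ⟨e, he⟩
    have hsub : b - h a ∈ h.range := mulRange_le_of_forall_nsmul_eq_zero hkill hab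
    simpa using add_mem hsub (⟨a, rfl⟩ : h a ∈ h.range)

end
end

section
/- Let h : A → B be a homomorphism of abelian groups whose cokernel has finite exponent, and suppose that for every integer N > 0 the N-torsion subgroup of B is finite. For an abelian group M, let M̂ = lim_{n ≥ 1} M/nM denote the inverse limit over the positive integers ordered by divisibility, and let ĥ : Â → B̂ be the homomorphism induced by h. Then the natural map from the completion of Ker(h) to Ker(ĥ) is surjective, and the cokernel of the natural map Ker(h) → Ker(ĥ) is a divisible abelian group. -/
noncomputable section

/-- The natural map `Ker(h) → Ker(ĥ)`. -/
def kerToHatKer {A B : Type*} [AddCommGroup A] [AddCommGroup B] (h : A →+ B) :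
    h.ker →+ (hatMap h).ker :=
  AddMonoidHom.codRestrict ((toHat A).comp h.ker.subtype) _
    (fun x => by
      have hx : h x.1 = 0 := x.2
      have : hatMap h (((toHat A).comp h.ker.subtype) x) = 0 := by
        ext n
        show (mapQuot h n (QuotientAddGroup.mk x.1) : B ⧸ mulRange n B) = 0
        show (QuotientAddGroup.mk (h x.1) : B ⧸ mulRange n B) = 0
        rw [hx]
        rfl
      exact this)

/-!
An element of `Ker ĥ` is a compatible family `yₙ ∈ A/nA` with `h yₙ = 0` in `B/nB`. Its possible lifts to
`Ker(h)/n` form a fibre of `Ker(h)/n → A/nA`. The fibre is non-empty because the cokernel of `h`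
is killed by some `e`, so a representative of `y_{ne}` can be corrected into `Ker h`; it is finite
because the kernel `(Ker h ∩ nA)/n Ker h` embeds into the `n`-torsion of `B` via `na ↦ h a`.
An inverse limit of non-empty finite sets is non-empty, which gives the surjectivity; it suffices
to work along the cofinal chain of factorials.

For the divisibility, every completion satisfies `M̂ = M + n M̂`: an element vanishing at level
`n` is `n` times a compatible family, obtained by lifting along the factorials.
-/

open CategoryTheory
open scoped Nat

section Quotients

variable {M N : Type*} [AddCommGroup M] [AddCommGroup N]

@[simp] lemma transMap_mk {n m : ℕ} (hd : n ∣ m) (a : M) :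
    transMap M hd (a : M ⧸ mulRange m M) = (a : M ⧸ mulRange n M) := rfl

@[simp] lemma mapQuot_mk (f : M →+ N) (n : ℕ) (a : M) :
    mapQuot f n (a : M ⧸ mulRange n M) = (f a : N ⧸ mulRange n N) := rfl

lemma transMap_transMap {n m p : ℕ} (hnm : n ∣ m) (hmp : m ∣ p) (x : M ⧸ mulRange p M) :
    transMap M hnm (transMap M hmp x) = transMap M (hnm.trans hmp) x := by
  induction x using QuotientAddGroup.induction_on with
  | H a => rfl

lemma transMap_self {n : ℕ} (hd : n ∣ n) (x : M ⧸ mulRange n M) : transMap M hd x = x := by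
  induction x using QuotientAddGroup.induction_on with
  | H a => rfl

lemma hatMap_apply (f : M →+ N) (x : hatCompletion M) (n : ℕ+) :
    (hatMap f x).1 n = mapQuot f n (x.1 n) := rfl

lemma hatMap_toHat (f : M →+ N) (a : M) : hatMap f (toHat M a) = toHat N (f a) := rfl

lemma coe_kerToHatKer (f : M →+ N) (k : f.ker) :
    (kerToHatKer f k : hatCompletion M) = toHat M k := rfl

end Quotients

lemma AddMonoidHom.finite_fiber_of_finite_ker {G H : Type*} [AddGroup G] [AddGroup H]
    (f : G →+ H) [Finite f.ker] (t : H) : Finite {g // f g = t} := by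
  rcases isEmpty_or_nonempty {g // f g = t} with _ | ⟨g₀, hg₀⟩
  · infer_instance
  refine Finite.of_injective (fun g : {g // f g = t} => (⟨g - g₀, ?_⟩ : f.ker)) ?_
  · simp [g.2, hg₀]
  · intro g g' hgg'
    exact Subtype.ext (sub_left_inj.1 (congrArg Subtype.val hgg'))

def factorialPNat (k : ℕ) : ℕ+ := ⟨k !, k.factorial_pos⟩

lemma factorialPNat_dvd_factorialPNat {k l : ℕ} (hkl : k ≤ l) :
    (factorialPNat k : ℕ) ∣ factorialPNat l :=
  Nat.factorial_dvd_factorial hkl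

lemma dvd_factorialPNat (n : ℕ+) : (n : ℕ) ∣ factorialPNat n :=
  Nat.dvd_factorial n.pos le_rfl

namespace hatCompletion

variable {M : Type*} [AddCommGroup M]

lemma transMap_factorialPNat_of_le {s : ∀ k : ℕ, M ⧸ mulRange (factorialPNat k) M}
    (hs : ∀ k, transMap M (factorialPNat_dvd_factorialPNat k.le_succ) (s (k + 1)) = s k)
    {k l : ℕ} (hkl : k ≤ l) : transMap M (factorialPNat_dvd_factorialPNat hkl) (s l) = s k := by
  induction l, hkl using Nat.le_induction with
  | base => exact transMap_self _ _
  | succ l hkl ih =>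
    rw [← ih, ← hs l, transMap_transMap]

/-- The factorials are cofinal for divisibility, so a compatible family along them suffices. -/
def ofFactorial (s : ∀ k : ℕ, M ⧸ mulRange (factorialPNat k) M)
    (hs : ∀ k, transMap M (factorialPNat_dvd_factorialPNat k.le_succ) (s (k + 1)) = s k) :
    hatCompletion M :=
  ⟨fun n => transMap M (dvd_factorialPNat n) (s n), fun n m hnm => by
    have hle : (n : ℕ) ≤ m := Nat.le_of_dvd m.pos hnm
    simp only [transMap_transMap]
    rw [← transMap_factorialPNat_of_le hs hle, transMap_transMap]⟩

lemma ofFactorial_apply (s : ∀ k : ℕ, M ⧸ mulRange (factorialPNat k) M)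
    (hs : ∀ k, transMap M (factorialPNat_dvd_factorialPNat k.le_succ) (s (k + 1)) = s k)
    (n : ℕ+) : (ofFactorial s hs).1 n = transMap M (dvd_factorialPNat n) (s n) := rfl

lemma exists_nsmul_mk_eq_of_apply_eq_zero (x : hatCompletion M) {n : ℕ+} (hx : x.1 n = 0)
    (m : ℕ+) : ∃ c : M, (((n : ℕ) • c : M) : M ⧸ mulRange (n * m : ℕ+) M) = x.1 (n * m) := by
  obtain ⟨a, ha⟩ := QuotientAddGroup.mk_surjective (x.1 (n * m))
  have hdown := x.2 n (n * m) (dvd_mul_right (n : ℕ) m)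
  rw [hx, ← ha] at hdown
  obtain ⟨c, hc⟩ := (QuotientAddGroup.eq_zero_iff (N := mulRange n M) a).1 hdown
  exact ⟨c, by rw [← ha]; exact congrArg _ hc⟩

lemma exists_nsmul_eq_of_apply_eq_zero (x : hatCompletion M) {n : ℕ+} (hx : x.1 n = 0) :
    ∃ w : hatCompletion M, (n : ℕ) • w = x := by
  choose c hc using fun k => exists_nsmul_mk_eq_of_apply_eq_zero x hx (factorialPNat k)
  -- `n • c k` is pinned down only up to `n`-torsion; the torsion defects `t k` are summed away
  have hdefect : ∀ k, ∃ t : M,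
      (n : ℕ) • t = 0 ∧ c (k + 1) - c k - t ∈ mulRange (factorialPNat k) M := by
    intro k
    have hcomp := x.2 (n * factorialPNat k) (n * factorialPNat (k + 1))
      (mul_dvd_mul_left (n : ℕ) (factorialPNat_dvd_factorialPNat k.le_succ))
    rw [← hc, ← hc] at hcomp
    obtain ⟨s, hs⟩ := (QuotientAddGroup.eq_iff_sub_mem (N := mulRange (n * k !) M)).1 hcomp
    refine ⟨c (k + 1) - c k - k ! • s, ?_, ⟨s, by abel⟩⟩
    have hs' : ((n : ℕ) * k !) • s = (n : ℕ) • c (k + 1) - (n : ℕ) • c k := hs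
    rw [smul_sub, smul_sub, smul_smul, hs']
    abel
  choose t ht0 ht using hdefect
  set D : ℕ → M := fun k => c k - ∑ j ∈ Finset.range k, t j
  have hD : ∀ k, D (k + 1) - D k = c (k + 1) - c k - t k := by
    intro k
    simp only [D, Finset.sum_range_succ]
    abel
  have hnD : ∀ k, (n : ℕ) • D k = (n : ℕ) • c k := by
    intro k
    simp [D, smul_sub, Finset.smul_sum, ht0]
  refine ⟨ofFactorial (fun k => (D k : M ⧸ mulRange (factorialPNat k) M)) (fun k => ?_), ?_⟩
  · rw [transMap_mk, QuotientAddGroup.eq_iff_sub_mem, hD]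
    exact ht k
  · ext m : 2
    have hdvd : (m : ℕ) ∣ (n * factorialPNat m : ℕ+) :=
      (dvd_factorialPNat m).mul_left (n : ℕ)
    calc ((n : ℕ) • ofFactorial (fun k => (D k : M ⧸ mulRange (factorialPNat k) M)) _).1 m
        = (((n : ℕ) • c m : M) : M ⧸ mulRange m M) := by
          rw [AddSubgroup.coe_nsmul, Pi.smul_apply, ofFactorial_apply, transMap_mk,
            ← QuotientAddGroup.mk_nsmul, hnD]
      _ = transMap M hdvd (x.1 (n * factorialPNat m)) := by rw [← hc]; rfl
      _ = x.1 m := x.2 _ _ hdvd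

lemma exists_eq_toHat_add_nsmul (x : hatCompletion M) {n : ℕ} (hn : 0 < n) :
    ∃ (a : M) (w : hatCompletion M), x = toHat M a + n • w := by
  obtain ⟨a, ha⟩ := QuotientAddGroup.mk_surjective (x.1 (n.toPNat hn))
  obtain ⟨w, hw⟩ := exists_nsmul_eq_of_apply_eq_zero (x - toHat M a) (n := n.toPNat hn)
    (by rw [AddSubgroup.coe_sub, Pi.sub_apply, ← ha]; exact sub_self _)
  have hw' : n • w = x - toHat M a := hw
  exact ⟨a, w, by rw [hw']; abel⟩

end hatCompletion

section Kernel

variable {A B : Type*} [AddCommGroup A] [AddCommGroup B]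

lemma exists_ker_sub_mem_mulRange (h : A →+ B) {e : ℕ} (he : ∀ x : B ⧸ h.range, e • x = 0)
    (n : ℕ) {a : A} (ha : h a ∈ mulRange (n * e) B) : ∃ k : h.ker, a - k ∈ mulRange n A := by
  obtain ⟨b, hb⟩ := ha
  obtain ⟨c, hc⟩ : e • b ∈ h.range := by
    rw [← QuotientAddGroup.eq_zero_iff, QuotientAddGroup.mk_nsmul]
    exact he _
  have hb' : (n * e) • b = h a := hb
  refine ⟨⟨a - n • c, ?_⟩, ⟨c, by simp⟩⟩
  rw [AddMonoidHom.mem_ker, map_sub, map_nsmul, hc, ← hb', mul_smul, sub_self]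

lemma exists_mapQuot_ker_subtype_eq (h : A →+ B) {e : ℕ} (he0 : 0 < e)
    (he : ∀ x : B ⧸ h.range, e • x = 0) {y : hatCompletion A} (hy : hatMap h y = 0) (n : ℕ+) :
    ∃ ξ, mapQuot h.ker.subtype n ξ = y.1 n := by
  obtain ⟨a, ha⟩ := QuotientAddGroup.mk_surjective (y.1 (n * e.toPNat he0))
  have hha : ((h a : B) : B ⧸ mulRange (n * e) B) = 0 := by
    have := congrArg (fun z : hatCompletion B => z.1 (n * e.toPNat he0)) hy
    rwa [hatMap_apply, ← ha] at this
  obtain ⟨k, hk⟩ := exists_ker_sub_mem_mulRange h he n ((QuotientAddGroup.eq_zero_iff _).1 hha)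
  refine ⟨(k : h.ker ⧸ mulRange n h.ker), ?_⟩
  calc mapQuot h.ker.subtype n k = ((k : A) : A ⧸ mulRange n A) := rfl
    _ = (a : A ⧸ mulRange n A) := (QuotientAddGroup.eq_iff_sub_mem.2 hk).symm
    _ = transMap A (dvd_mul_right (n : ℕ) e) (y.1 (n * e.toPNat he0)) := by rw [← ha]; rfl
    _ = y.1 n := y.2 n (n * e.toPNat he0) (dvd_mul_right (n : ℕ) e)

lemma finite_ker_mapQuot_ker_subtype (h : A →+ B) {n : ℕ}
    (htors : {x : B | n • x = 0}.Finite) : Finite (mapQuot h.ker.subtype n).ker := by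
  have hdiv : ∀ ξ : (mapQuot h.ker.subtype n).ker,
      ∃ (a : A) (k : h.ker), (k : A) = n • a ∧ (k : h.ker ⧸ mulRange n h.ker) = ξ := by
    rintro ⟨ξ, hξ⟩
    obtain ⟨k, rfl⟩ := QuotientAddGroup.mk_surjective ξ
    obtain ⟨a, ha⟩ := (QuotientAddGroup.eq_zero_iff _).1 hξ
    exact ⟨a, k, ha.symm, rfl⟩
  choose a k hka hk using hdiv
  have := htors.to_subtype
  refine Finite.of_injective (fun ξ => (⟨h (a ξ), ?_⟩ : {x : B | n • x = 0})) fun ξ ξ' hξξ' => ?_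
  · show n • h (a ξ) = 0
    rw [← map_nsmul, ← hka]
    exact (k ξ).2
  · have hker : a ξ - a ξ' ∈ h.ker := by
      rw [AddMonoidHom.mem_ker, map_sub, sub_eq_zero]
      exact congrArg Subtype.val hξξ'
    refine Subtype.ext ?_
    rw [← hk, ← hk, QuotientAddGroup.eq_iff_sub_mem]
    exact ⟨⟨_, hker⟩, Subtype.ext (by simp [smul_sub, hka])⟩

end Kernel

section Fibers

variable {M N : Type*} [AddCommGroup M] [AddCommGroup N]

def fiberSystem (f : N →+ M) (y : hatCompletion M) : ℕᵒᵖ ⥤ Type _ where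
  obj k := {ξ : N ⧸ mulRange (factorialPNat k.unop) N //
    mapQuot f (factorialPNat k.unop) ξ = y.1 (factorialPNat k.unop)}
  map {k l} g := TypeCat.ofHom fun ξ =>
    ⟨transMap N (factorialPNat_dvd_factorialPNat (leOfHom g.unop)) ξ.1, by
      rw [← transMap_mapQuot, ξ.2]
      exact y.2 (factorialPNat l.unop) (factorialPNat k.unop) _⟩
  map_id k := by
    ext ξ
    exact transMap_self _ ξ.1
  map_comp g g' := by
    ext ξ
    exact (transMap_transMap _ _ ξ.1).symm

lemma exists_hatMap_eq_of_finite_ker (f : N →+ M) (y : hatCompletion M)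
    (hne : ∀ n : ℕ+, ∃ ξ, mapQuot f n ξ = y.1 n) (hfin : ∀ n : ℕ+, Finite (mapQuot f n).ker) :
    ∃ x, hatMap f x = y := by
  have : ∀ k, Nonempty ((fiberSystem f y).obj k) := fun k =>
    let ⟨ξ, hξ⟩ := hne (factorialPNat k.unop); ⟨⟨ξ, hξ⟩⟩
  have : ∀ k, Finite ((fiberSystem f y).obj k) := fun k =>
    have := hfin (factorialPNat k.unop)
    (mapQuot f _).finite_fiber_of_finite_ker _
  obtain ⟨s, hs⟩ := nonempty_sections_of_finite_inverse_system (fiberSystem f y)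
  refine ⟨hatCompletion.ofFactorial (fun k => (s (.op k)).1)
    (fun k => congrArg Subtype.val (hs (homOfLE k.le_succ).op)), ?_⟩
  ext n : 2
  change mapQuot f n (transMap N (dvd_factorialPNat n) (s (.op n)).1) = y.1 n
  rw [← transMap_mapQuot, (s (.op n)).2]
  exact y.2 _ _ (dvd_factorialPNat n)

lemma hatMap_hatMap_ker_subtype (h : M →+ N) (x : hatCompletion h.ker) :
    hatMap h (hatMap h.ker.subtype x) = 0 := by
  ext n : 2
  rw [hatMap_apply, hatMap_apply]
  induction x.1 n using QuotientAddGroup.induction_on with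
  | H k => simp [AddMonoidHom.mem_ker.1 k.2]

end Fibers

/-- **Lemma (abelian groups, (ii)).**  Let `h : A → B` be a homomorphism of abelian groups
whose cokernel has finite exponent, and suppose that the `N`-torsion subgroup of `B` is
finite for every `N > 0`.  Then the natural map from the completion of `Ker(h)` to
`Ker(ĥ)` is surjective, and the cokernel of the natural map `Ker(h) → Ker(ĥ)` is a
divisible abelian group. -/
theorem hatKer_surjective_and_coker_divisible {A B : Type*} [AddCommGroup A] [AddCommGroup B]
    (h : A →+ B)
    (hcoker : ∃ e : ℕ, 0 < e ∧ ∀ x : B ⧸ h.range, e • x = 0)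
    (htors : ∀ N : ℕ, 0 < N → {x : B | N • x = 0}.Finite) :
    (∀ y : hatCompletion A, hatMap h y = 0 →
      ∃ x : hatCompletion h.ker, hatMap h.ker.subtype x = y) ∧
    (∀ (q : (hatMap h).ker ⧸ (kerToHatKer h).range) (n : ℕ), 0 < n → ∃ q', n • q' = q) := by
  obtain ⟨e, he0, he⟩ := hcoker
  have hsurj : ∀ y : hatCompletion A, hatMap h y = 0 →
      ∃ x : hatCompletion h.ker, hatMap h.ker.subtype x = y := fun y hy =>
    exists_hatMap_eq_of_finite_ker _ y (exists_mapQuot_ker_subtype_eq h he0 he hy)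
      fun n => finite_ker_mapQuot_ker_subtype h (htors n n.pos)
  refine ⟨hsurj, fun q n hn => ?_⟩
  obtain ⟨z, rfl⟩ := QuotientAddGroup.mk_surjective q
  obtain ⟨x, hx⟩ := hsurj z z.2
  obtain ⟨a, w, rfl⟩ := hatCompletion.exists_eq_toHat_add_nsmul x hn
  refine ⟨(⟨hatMap h.ker.subtype w, (hatMap h).mem_ker.2 (hatMap_hatMap_ker_subtype h w)⟩ :
    (hatMap h).ker), ?_⟩
  rw [← QuotientAddGroup.mk_nsmul, QuotientAddGroup.eq_iff_sub_mem]
  refine ⟨-a, Subtype.ext ?_⟩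
  rw [AddSubgroup.coe_sub, AddSubgroup.coe_nsmul, ← hx, map_add, map_nsmul, coe_kerToHatKer,
    hatMap_toHat, AddSubgroup.coe_neg, map_neg, AddSubgroup.coe_subtype]
  abel
end
end
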